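/- Fix J in N with J >= 1, rates lambda : Fin J -> R with lambda_j > 0 and Lambda = sum over j of lambda_j, costs b : Fin J -> R, capacities Q : Fin J -> N, lead time tau > 0, and A in R. Define G0 = A + sum over j of b_j * S(lambda_j * tau, Q_j) and ghat0 = sum over j of lambda_j * b_j * Ptail(lambda_j * tau, Q_j). Then G0 / tau > (G0 + ghat0 / Lambda) / (tau + 1 / Lambda) if and only if A > sum over j of b_j * Q_j * Ptail(lambda_j * tau, Q_j + 1). -/
import Mathlib


open scoped BigOperators

/-- Poisson probability mass function with mean `μ` at `r`. -/
noncomputable def poissonPMF (μ : ℝ) (r : ℕ) : ℝ :=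
  Real.exp (-μ) * μ ^ r / (Nat.factorial r)

/-- Poisson tail probability `P(D ≥ k)` for a natural-number threshold `k`. -/
noncomputable def Ptail (μ : ℝ) (k : ℕ) : ℝ :=
  ∑' r : ℕ, if k ≤ r then poissonPMF μ r else 0

/-- Expected shortage `E[(D - Q)^+]` for a natural-number capacity `Q`. -/
noncomputable def shortage (μ : ℝ) (Q : ℕ) : ℝ :=
  ∑' r : ℕ, if Q ≤ r then ((r : ℝ) - (Q : ℝ)) * poissonPMF μ r else 0

lemma summable_poissonPMF (μ : ℝ) : Summable (poissonPMF μ) := by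
  unfold poissonPMF
  simpa [mul_div_assoc] using (Real.summable_pow_div_factorial μ).mul_left (Real.exp (-μ))

lemma poissonPMF_succ (μ : ℝ) (r : ℕ) :
    ((r : ℝ) + 1) * poissonPMF μ (r + 1) = μ * poissonPMF μ r := by
  unfold poissonPMF
  rw [Nat.factorial_succ]
  have h1 : ((r : ℝ) + 1) ≠ 0 := by positivity
  push_cast
  field_simp
  ring

lemma summable_mul_poissonPMF (μ : ℝ) : Summable (fun r : ℕ => (r : ℝ) * poissonPMF μ r) := by
  rw [← summable_nat_add_iff 1]
  have : (fun r : ℕ => ((r + 1 : ℕ) : ℝ) * poissonPMF μ (r + 1)) =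
      fun r : ℕ => μ * poissonPMF μ r := by
    ext r; push_cast; exact poissonPMF_succ μ r
  rw [this]
  exact (summable_poissonPMF μ).mul_left μ

lemma summable_ite (k : ℕ) (f : ℕ → ℝ) (hf : Summable f) :
    Summable (fun r : ℕ => if k ≤ r then f r else 0) := by
  refine (hf.indicator {r : ℕ | k ≤ r}).congr fun r => ?_
  simp [Set.indicator_apply, Set.mem_setOf_eq]

lemma key_identity (μ : ℝ) (Q : ℕ) :
    (Q : ℝ) * Ptail μ (Q + 1) = μ * Ptail μ Q - shortage μ Q := by
  have hp := summable_poissonPMF μ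
  have hrp := summable_mul_poissonPMF μ
  -- μ * Ptail μ Q = ∑' r ≥ Q+1, r * p r
  have h1 : μ * Ptail μ Q = ∑' r : ℕ, (if Q + 1 ≤ r then (r : ℝ) * poissonPMF μ r else 0) := by
    rw [Ptail, ← tsum_mul_left]
    have hg : Summable (fun r : ℕ => if Q + 1 ≤ r then (r : ℝ) * poissonPMF μ r else 0) :=
      summable_ite (Q+1) _ hrp
    rw [Summable.tsum_eq_zero_add hg]
    simp only [Nat.cast_zero]
    rw [if_neg (by omega), zero_add]
    refine tsum_congr fun r => ?_
    by_cases h : Q ≤ r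
    · rw [if_pos h, if_pos (by omega), ← poissonPMF_succ μ r]; push_cast; ring
    · rw [if_neg h, if_neg (by omega), mul_zero]
  -- shortage: threshold can be raised to Q+1
  have h2 : shortage μ Q = ∑' r : ℕ, (if Q + 1 ≤ r then ((r : ℝ) - Q) * poissonPMF μ r else 0) := by
    rw [shortage]
    refine tsum_congr fun r => ?_
    by_cases h : Q + 1 ≤ r
    · rw [if_pos (by omega), if_pos h]
    · by_cases h' : Q ≤ r
      · have : r = Q := by omega
        subst this
        simp
      · rw [if_neg h', if_neg h]
  have hs2 : Summable (fun r : ℕ => if Q + 1 ≤ r then ((r : ℝ) - Q) * poissonPMF μ r else 0) := by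
    have : Summable (fun r : ℕ => ((r : ℝ) - Q) * poissonPMF μ r) := by
      have := hrp.sub (hp.mul_left (Q : ℝ))
      simpa [sub_mul] using this
    exact summable_ite (Q+1) _ this
  have h3 : (Q : ℝ) * Ptail μ (Q + 1) =
      ∑' r : ℕ, (if Q + 1 ≤ r then (Q : ℝ) * poissonPMF μ r else 0) := by
    rw [Ptail, ← tsum_mul_left]
    refine tsum_congr fun r => ?_
    by_cases h : Q + 1 ≤ r <;> simp [h]
  rw [h1, h2, h3, ← Summable.tsum_sub (summable_ite (Q+1) _ hrp) hs2]
  refine tsum_congr fun r => ?_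
  by_cases h : Q + 1 ≤ r <;> simp [h] <;> ring

/-- continuing without replenishment is optimal in the full
initial state iff `A` exceeds `A_min = ∑ⱼ bⱼ Qⱼ Ptail(λⱼτ, Qⱼ+1)`. -/
theorem continue_optimal_initial_state_iff (J : ℕ) (hJ : 1 ≤ J)
    (lam : Fin J → ℝ) (hlam : ∀ j, 0 < lam j)
    (b : Fin J → ℝ) (Q : Fin J → ℕ) (τ : ℝ) (hτ : 0 < τ) (A : ℝ) :
    (A + ∑ j, b j * shortage (lam j * τ) (Q j)) / τ >
        ((A + ∑ j, b j * shortage (lam j * τ) (Q j))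
            + (∑ j, lam j * b j * Ptail (lam j * τ) (Q j)) / (∑ j, lam j))
          / (τ + 1 / (∑ j, lam j))
      ↔ A > ∑ j, b j * (Q j : ℝ) * Ptail (lam j * τ) (Q j + 1) := by
  have hne : Nonempty (Fin J) := ⟨⟨0, hJ⟩⟩
  set Λ : ℝ := ∑ j, lam j with hΛdef
  have hΛ : 0 < Λ := Finset.sum_pos (fun j _ => hlam j) Finset.univ_nonempty
  set S : ℝ := ∑ j, b j * shortage (lam j * τ) (Q j) with hSdef
  set G : ℝ := A + S with hGdef
  set gh : ℝ := ∑ j, lam j * b j * Ptail (lam j * τ) (Q j) with ghdef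
  have hτΛ : 0 < τ + 1 / Λ := by positivity
  have hsum : ∑ j, b j * (Q j : ℝ) * Ptail (lam j * τ) (Q j + 1) = τ * gh - S := by
    rw [ghdef, hSdef, Finset.mul_sum, ← Finset.sum_sub_distrib]
    refine Finset.sum_congr rfl fun j _ => ?_
    rw [mul_assoc, key_identity (lam j * τ) (Q j)]
    ring
  have hkey : G * (τ + 1 / Λ) - (G + gh / Λ) * τ = (G - τ * gh) / Λ := by
    field_simp
    ring
  rw [gt_iff_lt, div_lt_div_iff₀ hτΛ hτ, ← sub_pos, hkey, lt_div_iff₀ hΛ, zero_mul,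
    sub_pos, hsum, gt_iff_lt]
  constructor <;> intro h <;> linarith
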